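/- Let Y be the triode: in the Euclidean plane, let D be the origin and A, B, C three points at distance 1 from D with the three segments making equal angles of 120° (concretely A = (1,0), B = (−1/2, √3/2), C = (−1/2, −√3/2)), and let Y = [D,A] ∪ [D,B] ∪ [D,C] with the Euclidean metric. Suppose ∧ and ∨ are binary operations on Y satisfying the lattice axioms (both operations commutative and associative, and the absorption laws x ∧ (x ∨ y) = x and x ∨ (x ∧ y) = x for all x, y ∈ Y), and suppose 0 < δ₀ ≤ δ₁ ≤ δ₂ ≤ δ₃ are reals such that each of ∧ and ∨ (with respect to the sum metric on Y × Y) is (δ₀,δ₁)-constrained, (δ₁,δ₂)-constrained, and (δ₂,δ₃)-constrained. Then δ₃ ≥ 0.5. (Hence μ₃*(Y, lattice theory) ≥ 0.5.) -/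

import Mathlib

/-!
Suppose `δ₃ < 1/2`. Put `b = A ∧ B ∧ C` and `t = A ∨ B ∨ C`. Each of `b`, `t` lies on one arm, so
some endpoint `E` has neither of them on its open arm `{g > 0}`, where `g = ⟪E, ·⟫` is the
arc-length coordinate of that arm. The maps `x ↦ E ∧ x` and `x ↦ E ∨ x` are
`(δ₀, δ₁)`-constrained on the connected space `Y` and move `E` to `E` and to `b`, resp. `t`;
as their values cannot jump over a gap of length `δ₁`, their ranges contain points
`z = E ∧ x` and `w = E ∨ y` with `g z, g w ∈ (0, δ₁)`. Then `d(z, w) < δ₁ ≤ δ₂`, so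
`d(E ∧ z, E ∧ w) < δ₃`; but `E ∧ z = z` and `E ∧ w = E`, while `d(z, E) > 1 - δ₁`.
Hence `1 < δ₁ + δ₃ ≤ 2 δ₃`.
-/

/-- The triode `Y ⊆ ℝ²`: union of the three unit segments from the origin `D`
to `A = (1,0)`, `B = (−1/2, √3/2)`, `C = (−1/2, −√3/2)`, with the Euclidean metric. -/
noncomputable def Triode : Set (EuclideanSpace ℝ (Fin 2)) :=
  segment ℝ (0 : EuclideanSpace ℝ (Fin 2)) ((WithLp.equiv 2 (Fin 2 → ℝ)).symm ![1, 0]) ∪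
  segment ℝ (0 : EuclideanSpace ℝ (Fin 2))
    ((WithLp.equiv 2 (Fin 2 → ℝ)).symm ![-(1/2), Real.sqrt 3 / 2]) ∪
  segment ℝ (0 : EuclideanSpace ℝ (Fin 2))
    ((WithLp.equiv 2 (Fin 2 → ℝ)).symm ![-(1/2), -(Real.sqrt 3 / 2)])

open Set
open scoped RealInnerProductSpace

section Constrained

variable {X Y Z : Type*} [PseudoMetricSpace X] [PseudoMetricSpace Y] [PseudoMetricSpace Z]

def IsConstrained (δ ε : ℝ) (f : X → Y) : Prop :=
  ∀ x x', dist x x' < δ → dist (f x) (f x') < ε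

theorem isConstrained_of_sum_dist {δ ε : ℝ} {f : X → X → Y}
    (hf : ∀ x y x' y', dist x x' + dist y y' < δ → dist (f x y) (f x' y') < ε) (a : X) :
    IsConstrained δ ε (f a) :=
  fun y y' h => hf a y a y' (by rwa [dist_self, zero_add])

namespace IsConstrained

variable {δ ε : ℝ} {f : X → Y}

theorem pos (hf : IsConstrained δ ε f) (hδ : 0 < δ) (x : X) : 0 < ε := by
  simpa using hf x x (by simpa using hδ)

theorem lipschitzWith_comp {g : Y → Z} (hg : LipschitzWith 1 g) (hf : IsConstrained δ ε f) :
    IsConstrained δ ε (g ∘ f) := fun x x' h =>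
  (hg.dist_le_mul _ _).trans_lt (by simpa using hf x x' h)

/-- A coarse intermediate value theorem: on a preconnected space, the values of a
`(δ, ε)`-constrained real function cannot jump over an interval of length `ε`. -/
theorem exists_mem_Ioo [PreconnectedSpace X] {f : X → ℝ} (hf : IsConstrained δ ε f)
    (hδ : 0 < δ) {a b : X} {c : ℝ} (ha : c ≤ f a) (hb : f b < c) :
    ∃ x, f x ∈ Ioo (c - ε) c := by
  by_contra! hgap
  have hclose : ∀ x y, dist y x < δ → (c ≤ f x ↔ c ≤ f y) := by
    intro x y hxy
    have hfxy := abs_lt.mp (Real.dist_eq _ _ ▸ hf y x hxy)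
    have hx := hgap x
    have hy := hgap y
    simp only [mem_Ioo, not_and, not_lt] at hx hy
    exact ⟨fun h => hy (by linarith), fun h => hx (by linarith)⟩
  have hclopen : IsClopen {x | c ≤ f x} := by
    refine ⟨⟨Metric.isOpen_iff.mpr fun x hx => ⟨δ, hδ, fun y hy => ?_⟩⟩,
      Metric.isOpen_iff.mpr fun x hx => ⟨δ, hδ, fun y hy => ?_⟩⟩
    · exact fun hy' => hx ((hclose x y hy).mpr hy')
    · exact (hclose x y hy).mp hx
  rcases isClopen_iff.mp hclopen with h | h
  · exact (h ▸ ha : a ∈ (∅ : Set X))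
  · exact (h ▸ mem_univ b : b ∈ {x | c ≤ f x}).not_gt hb

end IsConstrained

end Constrained

namespace Triode

noncomputable def vertex : Fin 3 → EuclideanSpace ℝ (Fin 2) :=
  ![(WithLp.equiv 2 (Fin 2 → ℝ)).symm ![1, 0],
    (WithLp.equiv 2 (Fin 2 → ℝ)).symm ![-(1/2), Real.sqrt 3 / 2],
    (WithLp.equiv 2 (Fin 2 → ℝ)).symm ![-(1/2), -(Real.sqrt 3 / 2)]]

theorem eq_iUnion_segment : Triode = ⋃ i, segment ℝ 0 (vertex i) := by
  ext x
  simp [Triode, vertex, Fin.exists_fin_succ, or_assoc]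

theorem inner_vertex (i j : Fin 3) :
    ⟪vertex i, vertex j⟫ = if i = j then 1 else -(1/2) := by
  have h3 : Real.sqrt 3 ^ 2 = 3 := Real.sq_sqrt (by norm_num)
  fin_cases i <;> fin_cases j <;>
    simp only [vertex, PiLp.inner_apply, Fin.sum_univ_two] <;> norm_num [div_pow] <;> linarith

theorem norm_vertex (i : Fin 3) : ‖vertex i‖ = 1 := by
  rw [norm_eq_sqrt_real_inner, inner_vertex, if_pos rfl, Real.sqrt_one]

theorem vertex_mem (i : Fin 3) : vertex i ∈ Triode :=
  eq_iUnion_segment ▸ mem_iUnion_of_mem i (right_mem_segment ℝ _ _)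

theorem zero_mem : (0 : EuclideanSpace ℝ (Fin 2)) ∈ Triode :=
  eq_iUnion_segment ▸ mem_iUnion_of_mem 0 (left_mem_segment ℝ _ _)

theorem starConvex : StarConvex ℝ 0 Triode := by
  rw [eq_iUnion_segment]
  exact starConvex_iUnion fun i => (convex_segment _ _).starConvex (left_mem_segment ℝ _ _)

instance : PathConnectedSpace Triode :=
  isPathConnected_iff_pathConnectedSpace.mp <|
    starConvex.isPathConnected zero_mem

theorem exists_eq_smul_vertex {x : EuclideanSpace ℝ (Fin 2)} (hx : x ∈ Triode) :
    ∃ i, ∃ s : ℝ, 0 ≤ s ∧ x = s • vertex i := by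
  rw [eq_iUnion_segment, mem_iUnion] at hx
  obtain ⟨i, hx⟩ := hx
  rw [segment_eq_image'] at hx
  obtain ⟨s, hs, rfl⟩ := hx
  exact ⟨i, s, hs.1, by simp⟩

theorem exists_forall_inner_nonpos {x : EuclideanSpace ℝ (Fin 2)} (hx : x ∈ Triode) :
    ∃ i, ∀ j, j ≠ i → ⟪vertex j, x⟫ ≤ 0 := by
  obtain ⟨i, s, hs, rfl⟩ := exists_eq_smul_vertex hx
  refine ⟨i, fun j hji => ?_⟩
  rw [real_inner_smul_right, inner_vertex, if_neg hji]
  linarith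

theorem eq_smul_of_inner_pos {x : EuclideanSpace ℝ (Fin 2)} (hx : x ∈ Triode) {j : Fin 3}
    (h : 0 < ⟪vertex j, x⟫) : x = ⟪vertex j, x⟫ • vertex j := by
  obtain ⟨i, s, hs, rfl⟩ := exists_eq_smul_vertex hx
  rw [real_inner_smul_right, inner_vertex] at h ⊢
  split_ifs at h ⊢ with hji
  · rw [hji, mul_one]
  · linarith

theorem dist_eq_of_inner_pos {x y : EuclideanSpace ℝ (Fin 2)} (hx : x ∈ Triode) (hy : y ∈ Triode)
    {j : Fin 3} (hxj : 0 < ⟪vertex j, x⟫) (hyj : 0 < ⟪vertex j, y⟫) :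
    dist x y = |⟪vertex j, x⟫ - ⟪vertex j, y⟫| := by
  rw [dist_eq_norm, eq_smul_of_inner_pos hx hxj, eq_smul_of_inner_pos hy hyj, ← sub_smul,
    norm_smul, norm_vertex, mul_one, Real.norm_eq_abs, ← eq_smul_of_inner_pos hx hxj,
    ← eq_smul_of_inner_pos hy hyj]

theorem lipschitzWith_inner_vertex (j : Fin 3) :
    LipschitzWith 1 fun x : Triode => ⟪vertex j, (x : EuclideanSpace ℝ (Fin 2))⟫ := by
  have hnorm : ‖innerSL ℝ (vertex j)‖₊ = 1 := by
    ext
    simp [innerSL_apply_norm, norm_vertex]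
  have := (innerSL ℝ (vertex j)).lipschitz.comp (LipschitzWith.subtype_val Triode)
  rwa [hnorm, mul_one] at this

end Triode

/-- `{g > 0}` plays the role of an open arm, on which `g` is an isometric coordinate, and the
bounds `b ≤ e ≤ t` lie off that arm. -/
theorem lt_add_of_isConstrained_inf_sup {X : Type*} [PseudoMetricSpace X] [PreconnectedSpace X]
    [Lattice X] {g : X → ℝ} (hg : LipschitzWith 1 g)
    (hg_pos : ∀ x y, 0 < g x → 0 < g y → dist x y = |g x - g y|)
    {b e t : X} (hbe : b ≤ e) (het : e ≤ t) (hb : g b ≤ 0) (ht : g t ≤ 0)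
    {δ₀ δ₁ δ₂ δ₃ : ℝ} (hδ₀ : 0 < δ₀) (h12 : δ₁ ≤ δ₂)
    (hinf : IsConstrained δ₀ δ₁ (e ⊓ ·)) (hsup : IsConstrained δ₀ δ₁ (e ⊔ ·))
    (hinf' : IsConstrained δ₂ δ₃ (e ⊓ ·)) :
    g e < δ₁ + δ₃ := by
  by_contra! h
  have hδ₁ : 0 < δ₁ := hinf.pos hδ₀ e
  have hδ₃ : 0 < δ₃ := hinf'.pos (hδ₁.trans_le h12) e
  obtain ⟨x, hx⟩ := (hinf.lipschitzWith_comp hg).exists_mem_Ioo hδ₀ (a := e) (b := b) (c := δ₁)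
    (by simp only [Function.comp_apply, inf_idem]; linarith)
    (by simp only [Function.comp_apply, inf_eq_right.mpr hbe]; linarith)
  obtain ⟨y, hy⟩ := (hsup.lipschitzWith_comp hg).exists_mem_Ioo hδ₀ (a := e) (b := t) (c := δ₁)
    (by simp only [Function.comp_apply, sup_idem]; linarith)
    (by simp only [Function.comp_apply, sup_eq_right.mpr het]; linarith)
  simp only [Function.comp_apply, sub_self, mem_Ioo] at hx hy
  have hzw : dist (e ⊓ x) (e ⊔ y) < δ₂ := by
    rw [hg_pos _ _ hx.1 hy.1, abs_sub_lt_iff]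
    constructor <;> linarith
  have hze : dist (e ⊓ x) e < δ₃ := by
    simpa only [inf_left_idem, inf_sup_self] using hinf' _ _ hzw
  have hgze := hg.dist_le_mul (e ⊓ x) e
  rw [Real.dist_eq, abs_sub_comm, NNReal.coe_one, one_mul] at hgze
  linarith [le_abs_self (g e - g (e ⊓ x))]

theorem triode_lattice_delta3_ge_half_general
    (meet join : Triode → Triode → Triode)
    -- lattice axioms:
    (hmc : ∀ x y, meet x y = meet y x)
    (hjc : ∀ x y, join x y = join y x)
    (hma : ∀ x y z, meet (meet x y) z = meet x (meet y z))
    (hja : ∀ x y z, join (join x y) z = join x (join y z))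
    (habs1 : ∀ x y, meet x (join x y) = x)
    (habs2 : ∀ x y, join x (meet x y) = x)
    (δ₀ δ₁ δ₂ δ₃ : ℝ)
    (h0 : 0 < δ₀) (h12 : δ₁ ≤ δ₂) (h23 : δ₂ ≤ δ₃)
    -- constraints (sum metric on the product):
    (hm01 : ∀ x y x' y', dist x x' + dist y y' < δ₀ → dist (meet x y) (meet x' y') < δ₁)
    (hm23 : ∀ x y x' y', dist x x' + dist y y' < δ₂ → dist (meet x y) (meet x' y') < δ₃)
    (hj01 : ∀ x y x' y', dist x x' + dist y y' < δ₀ → dist (join x y) (join x' y') < δ₁) :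
    (0.5 : ℝ) ≤ δ₃ := by
  let : Max Triode := ⟨join⟩
  let : Min Triode := ⟨meet⟩
  let : Lattice Triode := Lattice.mk' hjc hja hmc hma habs2 habs1
  let V : Fin 3 → Triode := fun i => ⟨Triode.vertex i, Triode.vertex_mem i⟩
  let b := Finset.univ.inf' Finset.univ_nonempty V
  let t := Finset.univ.sup' Finset.univ_nonempty V
  obtain ⟨i, hi⟩ := Triode.exists_forall_inner_nonpos b.2
  obtain ⟨j, hj⟩ := Triode.exists_forall_inner_nonpos t.2
  obtain ⟨k, hki, hkj⟩ : ∃ k, k ≠ i ∧ k ≠ j :=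
    (by decide : ∀ i j : Fin 3, ∃ k, k ≠ i ∧ k ≠ j) i j
  have hlt := lt_add_of_isConstrained_inf_sup (Triode.lipschitzWith_inner_vertex k)
    (fun x y => Triode.dist_eq_of_inner_pos x.2 y.2) (Finset.inf'_le V (Finset.mem_univ k))
    (Finset.le_sup' V (Finset.mem_univ k)) (hi k hki) (hj k hkj) h0 h12
    (isConstrained_of_sum_dist hm01 _) (isConstrained_of_sum_dist hj01 _)
    (isConstrained_of_sum_dist hm23 _)
  rw [Triode.inner_vertex, if_pos rfl] at hlt
  linarith

/-- If `∧`, `∨` are lattice operations on the triode `Y`, each `(δ₀,δ₁)`-, `(δ₁,δ₂)`-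
and `(δ₂,δ₃)`-constrained (with the sum metric on `Y × Y`), where
`0 < δ₀ ≤ δ₁ ≤ δ₂ ≤ δ₃`, then `δ₃ ≥ 0.5`. -/
theorem triode_lattice_delta3_ge_half
    (meet join : Triode → Triode → Triode)
    -- lattice axioms:
    (hmc : ∀ x y, meet x y = meet y x)
    (hjc : ∀ x y, join x y = join y x)
    (hma : ∀ x y z, meet (meet x y) z = meet x (meet y z))
    (hja : ∀ x y z, join (join x y) z = join x (join y z))
    (habs1 : ∀ x y, meet x (join x y) = x)
    (habs2 : ∀ x y, join x (meet x y) = x)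
    (δ₀ δ₁ δ₂ δ₃ : ℝ)
    (h0 : 0 < δ₀) (h01 : δ₀ ≤ δ₁) (h12 : δ₁ ≤ δ₂) (h23 : δ₂ ≤ δ₃)
    -- constraints (sum metric on the product):
    (hm01 : ∀ x y x' y', dist x x' + dist y y' < δ₀ → dist (meet x y) (meet x' y') < δ₁)
    (hm12 : ∀ x y x' y', dist x x' + dist y y' < δ₁ → dist (meet x y) (meet x' y') < δ₂)
    (hm23 : ∀ x y x' y', dist x x' + dist y y' < δ₂ → dist (meet x y) (meet x' y') < δ₃)
    (hj01 : ∀ x y x' y', dist x x' + dist y y' < δ₀ → dist (join x y) (join x' y') < δ₁)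
    (hj12 : ∀ x y x' y', dist x x' + dist y y' < δ₁ → dist (join x y) (join x' y') < δ₂)
    (hj23 : ∀ x y x' y', dist x x' + dist y y' < δ₂ → dist (join x y) (join x' y') < δ₃) :
    (0.5 : ℝ) ≤ δ₃ :=
  triode_lattice_delta3_ge_half_general meet join hmc hjc hma hja habs1 habs2 δ₀ δ₁ δ₂ δ₃ h0 h12 h23
    hm01 hm23 hj01
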